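/- Let g(n) = S_1(n) - S_3(n), where S_1(n) = sum_{k in Z} q^{3k^2 - k - 3kn} [n choose 3k-n]_q and S_3(n) = sum_{k in Z} q^{3k^2 - k - 3kn} [n choose 3k-1-n]_q. Then g satisfies the recurrence g(n) = -q^{-n} * g(n-1) for all n >= 1, and g(0) = 1. -/

import Mathlib

/-- Gaussian binomial coefficient `[n choose r]_q`, defined via the q-Pascal
recurrence, with the convention that it is `0` when `r < 0` or `r > n`. -/
def qbinom {K : Type*} [CommRing K] (q : K) : ℕ → ℤ → K
  | 0, r => if r = 0 then 1 else 0
  | n + 1, r => q ^ r.toNat * qbinom q n r + qbinom q n (r - 1)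

noncomputable def S1 {K : Type*} [Field K] (q : K) (n : ℕ) : K :=
  ∑ᶠ k : ℤ, q ^ (3 * k ^ 2 - k - 3 * k * n) * qbinom q n (3 * k - n)

noncomputable def S3 {K : Type*} [Field K] (q : K) (n : ℕ) : K :=
  ∑ᶠ k : ℤ, q ^ (3 * k ^ 2 - k - 3 * k * n) * qbinom q n (3 * k - 1 - n)

noncomputable def g {K : Type*} [Field K] (q : K) (n : ℕ) : K := S1 q n - S3 q n

/-!
Write `H(a, i, m) = qbinomSum q a i m = ∑ₖ q^(3k² + ak - 3km) [m, 3k - i - m]`, so that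
`S1 = H(-1, 0)` and `S3 = H(-1, 1)`. The q-Pascal rule writes `H(·, ·, m + 1)` through sums at
level `m`; the symmetry `[m, r] = [m, m - r]`, read through the reflection `k ↦ m + d - k`, and the
relation `(1 - q^r) [m, r] = (1 - q^(m + 1 - r)) [m, r - 1]` between neighbouring coefficients then
turn `g(m + 1)` into `-q^(-m-1) g(m)`.
-/

section CommRing

variable {K : Type*} [CommRing K] (q : K)

theorem qbinom_of_neg : ∀ (n : ℕ) {r : ℤ}, r < 0 → qbinom q n r = 0
  | 0, r, hr => by simp [qbinom, hr.ne]
  | n + 1, r, hr => by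
    rw [qbinom, qbinom_of_neg n hr, qbinom_of_neg n (by omega : r - 1 < 0), mul_zero, add_zero]

theorem qbinom_of_gt : ∀ (n : ℕ) {r : ℤ}, (n : ℤ) < r → qbinom q n r = 0
  | 0, r, hr => by
    rw [Nat.cast_zero] at hr
    simp [qbinom, hr.ne']
  | n + 1, r, hr => by
    rw [qbinom, qbinom_of_gt n (by omega : (n : ℤ) < r), qbinom_of_gt n (by omega : (n : ℤ) < r - 1),
      mul_zero, add_zero]

@[fun_prop]
theorem hasFiniteSupport_qbinom (i : ℤ) (m : ℕ) :
    Function.HasFiniteSupport fun k : ℤ => qbinom q m (3 * k - i - m) := by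
  refine (Set.finite_Icc (-(i.natAbs + m) : ℤ) (i.natAbs + m)).subset fun k hk => ?_
  have hnonneg : 0 ≤ 3 * k - i - m := by
    by_contra h
    exact hk (qbinom_of_neg q m (not_le.mp h))
  have hle : 3 * k - i - m ≤ m := by
    by_contra h
    exact hk (qbinom_of_gt q m (not_le.mp h))
  simp only [Set.mem_Icc]
  omega

end CommRing

section Field

variable {K : Type*} [Field K]

theorem qbinom_succ (q : K) (n : ℕ) (r : ℤ) :
    qbinom q (n + 1) r = q ^ r * qbinom q n r + qbinom q n (r - 1) := by
  rcases le_or_gt 0 r with h | h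
  · rw [qbinom, ← zpow_natCast, Int.toNat_of_nonneg h]
  · rw [qbinom, qbinom_of_neg q n h, qbinom_of_neg q n (by omega : r - 1 < 0)]
    ring

theorem g_zero (q : K) : g q 0 = 1 := by
  have hS1 : S1 q 0 = 1 := by
    rw [S1, finsum_eq_single _ 0 fun k hk => by simp [qbinom, hk]]
    simp [qbinom]
  have hS3 : S3 q 0 = 0 := by
    refine (finsum_congr fun k => ?_).trans finsum_zero
    simp [qbinom, show 3 * k - 1 ≠ 0 by omega]
  rw [g, hS1, hS3, sub_zero]

noncomputable def qbinomSum (q : K) (a i : ℤ) (m : ℕ) : K :=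
  ∑ᶠ k : ℤ, q ^ (3 * k ^ 2 + a * k - 3 * k * m) * qbinom q m (3 * k - i - m)

theorem S1_eq_qbinomSum (q : K) (n : ℕ) : S1 q n = qbinomSum q (-1) 0 n :=
  finsum_congr fun k => by ring_nf

theorem S3_eq_qbinomSum (q : K) (n : ℕ) : S3 q n = qbinomSum q (-1) 1 n :=
  finsum_congr fun k => by ring_nf

variable {q : K}

theorem qbinom_succ' (hq : q ≠ 0) : ∀ (n : ℕ) (r : ℤ),
    qbinom q (n + 1) r = qbinom q n r + q ^ ((n : ℤ) + 1 - r) * qbinom q n (r - 1)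
  | 0, r => by
    rcases eq_or_ne r 0 with rfl | h0
    · simp [qbinom]
    rcases eq_or_ne r 1 with rfl | h1
    · simp [qbinom]
    · simp [qbinom, h0, sub_ne_zero.mpr h1]
  | n + 1, r => by
    have h₁ := qbinom_succ q (n + 1) r
    have h₂ := qbinom_succ q n r
    have h₃ := qbinom_succ q n (r - 1)
    have h₄ := qbinom_succ' hq n r
    have h₅ := qbinom_succ' hq n (r - 1)
    have e₁ : q ^ r = q ^ (r - 1) * q := by rw [← zpow_add_one₀ hq, sub_add_cancel]
    have e₂ : q ^ ((n : ℤ) + 1 + 1 - r) = q ^ ((n : ℤ) + 1 - r) * q := by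
      rw [← zpow_add_one₀ hq]; ring_nf
    rw [show (n : ℤ) + 1 - (r - 1) = n + 1 + 1 - r by ring, e₂] at h₅
    rw [e₁] at h₁ h₂
    push_cast
    rw [e₂]
    linear_combination h₁ - h₂ + (q ^ (r - 1) * q) * h₄ - (q ^ ((n : ℤ) + 1 - r) * q) * h₃ + h₅

theorem one_sub_zpow_mul_qbinom (hq : q ≠ 0) (n : ℕ) (r : ℤ) :
    (1 - q ^ r) * qbinom q n r = (1 - q ^ ((n : ℤ) + 1 - r)) * qbinom q n (r - 1) := by
  linear_combination qbinom_succ q n r - qbinom_succ' hq n r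

theorem qbinom_symm (hq : q ≠ 0) : ∀ (n : ℕ) (r : ℤ), qbinom q n r = qbinom q n (n - r)
  | 0, r => by
    rcases eq_or_ne r 0 with rfl | h0
    · simp
    · simp [qbinom, h0]
  | n + 1, r => by
    rw [qbinom_succ, qbinom_succ' hq, qbinom_symm hq n r, qbinom_symm hq n (r - 1)]
    push_cast
    ring_nf

theorem qbinomSum_succ (hq : q ≠ 0) (a i : ℤ) (m : ℕ) :
    qbinomSum q a i (m + 1) =
      q ^ (-i - m - 1) * qbinomSum q a (i + 1) m + qbinomSum q (a - 3) (i + 2) m := by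
  simp only [qbinomSum, mul_finsum]
  rw [← finsum_add_distrib (by fun_prop) (by fun_prop)]
  refine finsum_congr fun k => ?_
  rw [show 3 * k - i - ((m + 1 : ℕ) : ℤ) = 3 * k - (i + 1) - m by push_cast; ring, qbinom_succ,
    show 3 * k - (i + 1) - m - 1 = 3 * k - (i + 2) - m by ring, mul_add, ← mul_assoc,
    ← mul_assoc, ← zpow_add₀ hq, ← zpow_add₀ hq]
  push_cast
  ring_nf

theorem qbinomSum_reflect (hq : q ≠ 0) (a i d : ℤ) (m : ℕ) :
    qbinomSum q a i m = q ^ ((m + d) * (a + 3 * d)) * qbinomSum q (-a - 6 * d) (3 * d - i) m := by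
  simp only [qbinomSum, mul_finsum]
  rw [← finsum_comp_equiv (Equiv.subLeft ((m : ℤ) + d))]
  refine finsum_congr fun k => ?_
  rw [Equiv.subLeft_apply, qbinom_symm hq m, ← mul_assoc, ← zpow_add₀ hq]
  ring_nf

theorem qbinomSum_sub_zpow_mul (hq : q ≠ 0) (a i : ℤ) (m : ℕ) :
    qbinomSum q a i m - q ^ (-i - m) * qbinomSum q (a + 3) i m =
      qbinomSum q a (i + 1) m - q ^ (2 * m + 1 + i) * qbinomSum q (a - 3) (i + 1) m := by
  simp only [qbinomSum, mul_finsum]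
  rw [← finsum_sub_distrib (by fun_prop) (by fun_prop),
    ← finsum_sub_distrib (by fun_prop) (by fun_prop)]
  refine finsum_congr fun k => ?_
  have h := one_sub_zpow_mul_qbinom hq m (3 * k - i - m)
  rw [show 3 * k - i - m - 1 = 3 * k - (i + 1) - m by ring] at h
  have e₁ : q ^ (-i - m) * q ^ (3 * k ^ 2 + (a + 3) * k - 3 * k * m) =
      q ^ (3 * k ^ 2 + a * k - 3 * k * m) * q ^ (3 * k - i - m) := by
    rw [← zpow_add₀ hq, ← zpow_add₀ hq]; ring_nf
  have e₂ : q ^ (2 * m + 1 + i) * q ^ (3 * k ^ 2 + (a - 3) * k - 3 * k * m) =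
      q ^ (3 * k ^ 2 + a * k - 3 * k * m) * q ^ ((m : ℤ) + 1 - (3 * k - i - m)) := by
    rw [← zpow_add₀ hq, ← zpow_add₀ hq]; ring_nf
  linear_combination q ^ (3 * k ^ 2 + a * k - 3 * k * m) * h - qbinom q m (3 * k - i - m) * e₁ +
    qbinom q m (3 * k - (i + 1) - m) * e₂

theorem g_succ (hq : q ≠ 0) (m : ℕ) : g q (m + 1) = -q ^ (-((m + 1 : ℕ) : ℤ)) * g q m := by
  have pascal₀ : qbinomSum q (-1) 0 (m + 1) =
      q ^ (-(m : ℤ) - 1) * qbinomSum q (-1) 1 m + qbinomSum q (-4) 2 m := by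
    rw [qbinomSum_succ hq]; ring_nf
  have pascal₁ : qbinomSum q (-1) 1 (m + 1) =
      q ^ (-(m : ℤ) - 2) * qbinomSum q (-1) 2 m + qbinomSum q (-4) 3 m := by
    rw [qbinomSum_succ hq]; ring_nf
  have reflect₁ : qbinomSum q (-4) 2 m = q ^ (-(m : ℤ) - 1) * qbinomSum q (-2) 1 m := by
    rw [qbinomSum_reflect hq _ _ 1]; ring_nf
  have reflect₂ : qbinomSum q (-1) 2 m = q ^ (2 * (m : ℤ) + 2) * qbinomSum q (-5) 1 m := by
    rw [qbinomSum_reflect hq _ _ 1]; ring_nf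
  have reflect₃ : qbinomSum q (-4) 3 m = q ^ (-(m : ℤ) - 1) * qbinomSum q (-2) 0 m := by
    rw [qbinomSum_reflect hq _ _ 1]; ring_nf
  have reflect₄ : qbinomSum q 1 0 m = q ^ (m : ℤ) * qbinomSum q (-1) 0 m := by
    rw [qbinomSum_reflect hq _ _ 0]; ring_nf
  have key : qbinomSum q (-2) 0 m - q ^ (-(m : ℤ)) * qbinomSum q 1 0 m =
      qbinomSum q (-2) 1 m - q ^ (2 * (m : ℤ) + 1) * qbinomSum q (-5) 1 m := by
    simpa using qbinomSum_sub_zpow_mul hq (-2) 0 m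
  rw [reflect₄] at key
  rw [g, g, S1_eq_qbinomSum, S3_eq_qbinomSum, S1_eq_qbinomSum, S3_eq_qbinomSum, pascal₀, pascal₁,
    reflect₁, reflect₂, reflect₃]
  simp only [zpow_add₀ hq, zpow_sub₀ hq, zpow_neg, zpow_mul, zpow_natCast, zpow_one] at key ⊢
  field_simp at key ⊢
  linear_combination -q ^ (m + 1) * key

end Field

theorem stmt_4 {K : Type*} [Field K] (q : K) (hq : q ≠ 0) :
    g q 0 = 1 ∧ ∀ n : ℕ, 1 ≤ n → g q n = -q ^ (-(n : ℤ)) * g q (n - 1) := by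
  refine ⟨g_zero q, fun n hn => ?_⟩
  obtain ⟨m, rfl⟩ := Nat.exists_eq_add_of_le' hn
  exact g_succ hq m
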